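/- Quasi-optimality of the derivative of the temporal Ritz projection (intermediate estimate in the proof of Lemma 3.3): let X be a complex Hilbert space, k ≥ 1 an integer, and I = [a, a+τ] with τ > 0. There exists a constant C depending only on k (independent of τ, u and X) such that for every u ∈ C¹(I;X), sup_{t∈I} ‖u'(t) − (Ru)'(t)‖ ≤ C · inf { sup_{t∈I} ‖u'(t) − g'(t)‖ : g an X-valued polynomial of degree ≤ k }. -/

import Mathlib

/-!
Fix a competitor `g` and put `v = p' - g'`, a polynomial of degree `≤ k - 1`. The Ritz condition
makes `u' - p'` L²-orthogonal to `v`, so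
`∫ ‖v‖² = ∫ ⟪u' - g', v⟫ ≤ τ ‖u' - g'‖_∞ ‖v‖_∞`.
An inverse inequality `τ ‖v‖_∞² ≤ C ∫ ‖v‖²` for polynomials of degree `≤ k - 1` then gives
`‖v‖_∞ ≤ C ‖u' - g'‖_∞`, and the triangle inequality gives the constant `1 + C`. The inverse
inequality holds for scalar polynomials on `[0, 1]` by compactness of the unit sphere of
coefficient vectors; it passes to `X` by testing `v` against its own value `v t`, and to
`[a, a + τ]` by an affine change of variables.
-/

open MeasureTheory

universe u

/-- `f : ℝ → X` is an `X`-valued polynomial of degree at most `m`. -/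
def IsPolyDeg (X : Type*) [AddCommGroup X] [Module ℝ X] (m : ℕ) (f : ℝ → X) : Prop :=
  ∃ φ : Fin (m + 1) → X, ∀ t : ℝ, f t = ∑ i : Fin (m + 1), t ^ (i : ℕ) • φ i

/-- `p` is the temporal Ritz projection of `u` on `[a,b]`: the `X`-valued polynomial of
degree ≤ k with `p a = u a` whose derivative is the L²(a,b)-projection of `u'` onto
polynomials of degree ≤ k-1. -/
def IsRitzOn (X : Type*) [NormedAddCommGroup X] [InnerProductSpace ℂ X]
    (a b : ℝ) (k : ℕ) (u p : ℝ → X) : Prop :=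
  IsPolyDeg X k p ∧ p a = u a ∧
    ∀ χ : ℝ → X, IsPolyDeg X (k - 1) χ →
      (∫ t in a..b, (inner ℂ (deriv u t - deriv p t) (χ t) : ℂ)) = 0

open Set intervalIntegral

section Algebraic

variable {X : Type*} [AddCommGroup X] [Module ℝ X] {m : ℕ} {f g : ℝ → X}

theorem IsPolyDeg.sub (hf : IsPolyDeg X m f) (hg : IsPolyDeg X m g) : IsPolyDeg X m (f - g) := by
  obtain ⟨φ, hφ⟩ := hf
  obtain ⟨ψ, hψ⟩ := hg
  exact ⟨φ - ψ, fun t => by simp [hφ, hψ, smul_sub]⟩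

theorem IsPolyDeg.comp_add_mul (hf : IsPolyDeg X m f) (a τ : ℝ) :
    IsPolyDeg X m (fun s => f (a + τ * s)) := by
  obtain ⟨φ, hφ⟩ := hf
  let q : Fin (m + 1) → Polynomial ℝ :=
    fun i => (Polynomial.C τ * Polynomial.X + Polynomial.C a) ^ (i : ℕ)
  have hq : ∀ (i : Fin (m + 1)) (s : ℝ),
      (a + τ * s) ^ (i : ℕ) = ∑ j : Fin (m + 1), (q i).coeff j * s ^ (j : ℕ) := by
    intro i s
    have hdeg : (q i).natDegree < m + 1 :=
      (Polynomial.natDegree_pow_le_of_le _ Polynomial.natDegree_linear_le).trans_lt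
        (by simpa using i.isLt)
    rw [Fin.sum_univ_eq_sum_range (fun j => (q i).coeff j * s ^ j),
      ← Polynomial.eval_eq_sum_range' hdeg]
    simp [q, add_comm]
  refine ⟨fun j => ∑ i, (q i).coeff j • φ i, fun s => ?_⟩
  simp_rw [hφ, hq, Finset.sum_smul, Finset.smul_sum, smul_smul, mul_comm]
  exact Finset.sum_comm

end Algebraic

section Normed

variable {X : Type*} [NormedAddCommGroup X] [NormedSpace ℝ X] {m : ℕ} {f : ℝ → X}

theorem IsPolyDeg.continuous (hf : IsPolyDeg X m f) : Continuous f := by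
  obtain ⟨φ, hφ⟩ := hf
  rw [funext hφ]
  fun_prop

theorem IsPolyDeg.deriv (hf : IsPolyDeg X (m + 1) f) : IsPolyDeg X m (deriv f) := by
  obtain ⟨φ, hφ⟩ := hf
  refine ⟨fun j => ((j : ℝ) + 1) • φ j.succ, fun t => ?_⟩
  have hder : HasDerivAt f (∑ i : Fin (m + 2), ((i : ℕ) * t ^ ((i : ℕ) - 1)) • φ i) t := by
    rw [funext hφ]
    exact HasDerivAt.fun_sum fun i _ => (hasDerivAt_pow (i : ℕ) t).smul_const (φ i)
  rw [hder.deriv, Fin.sum_univ_succ]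
  simp [smul_smul, mul_comm]

end Normed

section Inner

variable {X : Type*} [NormedAddCommGroup X] [InnerProductSpace ℂ X] {m : ℕ} {f : ℝ → X}

theorem IsPolyDeg.inner_left (x : X) (hf : IsPolyDeg X m f) :
    IsPolyDeg ℂ m (fun s => inner ℂ x (f s)) := by
  obtain ⟨φ, hφ⟩ := hf
  refine ⟨fun i => inner ℂ x (φ i), fun s => ?_⟩
  simp [hφ]

end Inner

theorem exists_pos_mul_sq_norm_le_of_homogeneous {V : Type*} [NormedAddCommGroup V]
    [NormedSpace ℝ V] [ProperSpace V] {N : V → ℝ} (hN : Continuous N)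
    (hsmul : ∀ (r : ℝ) (v : V), N (r • v) = r ^ 2 * N v) (hpos : ∀ v, v ≠ 0 → 0 < N v) :
    ∃ c > 0, ∀ v, c * ‖v‖ ^ 2 ≤ N v := by
  have hN0 : N 0 = 0 := by simpa using hsmul 0 0
  rcases subsingleton_or_nontrivial V with hV | hV
  · exact ⟨1, one_pos, fun v => by simp [Subsingleton.elim v 0, hN0]⟩
  obtain ⟨v₀, hv₀, hmin⟩ := (isCompact_sphere (0 : V) 1).exists_isMinOn
    (NormedSpace.sphere_nonempty.mpr zero_le_one) hN.continuousOn
  refine ⟨N v₀, hpos v₀ (ne_zero_of_mem_unit_sphere ⟨v₀, hv₀⟩), fun v => ?_⟩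
  rcases eq_or_ne v 0 with rfl | hv
  · simp [hN0]
  have hnorm : 0 < ‖v‖ := norm_pos_iff.mpr hv
  have hmem : ‖v‖⁻¹ • v ∈ Metric.sphere (0 : V) 1 := by
    simp [norm_smul, hnorm.ne']
  have := hmin hmem
  rw [Set.mem_ofPred_eq, hsmul, inv_pow] at this
  rwa [le_inv_mul_iff₀ (by positivity), mul_comm] at this

theorem finite_setOf_sum_pow_smul_eq_zero {n : ℕ} {φ : Fin n → ℂ} (hφ : φ ≠ 0) :
    {s : ℝ | ∑ i : Fin n, s ^ (i : ℕ) • φ i = 0}.Finite := by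
  let q : Polynomial ℂ := ∑ i, Polynomial.C (φ i) * Polynomial.X ^ (i : ℕ)
  have hcoeff : ∀ i : Fin n, q.coeff i = φ i := by
    intro i
    simp [q, Polynomial.finsetSum_coeff, Fin.val_inj]
  have hq : q ≠ 0 := fun h => hφ (funext fun i => by simp [← hcoeff i, h])
  have hroots : {z : ℂ | q.IsRoot z}.Finite := Polynomial.finite_setOfPred_isRoot hq
  refine (hroots.preimage Complex.ofReal_injective.injOn).subset fun s hs => ?_
  simp only [mem_ofPred_eq, mem_preimage, Polynomial.IsRoot, q, Polynomial.eval_finsetSum] at hs ⊢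
  rw [← hs]
  refine Finset.sum_congr rfl fun i _ => ?_
  simp only [Polynomial.eval_mul, Polynomial.eval_C, Polynomial.eval_pow, Polynomial.eval_X,
    Complex.real_smul, Complex.ofReal_pow, mul_comm]

theorem integral_sq_norm_sum_pow_smul_pos {n : ℕ} {φ : Fin n → ℂ} (hφ : φ ≠ 0) :
    0 < ∫ s in (0 : ℝ)..1, ‖∑ i : Fin n, s ^ (i : ℕ) • φ i‖ ^ 2 := by
  have hcont : Continuous fun s : ℝ => ‖∑ i : Fin n, s ^ (i : ℕ) • φ i‖ ^ 2 := by
    fun_prop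
  rw [integral_pos_iff_support_of_nonneg_ae (.of_forall fun s => by positivity)
    (hcont.intervalIntegrable _ _)]
  refine ⟨zero_lt_one, ?_⟩
  have hsub : Ioc (0 : ℝ) 1 \ {s | ∑ i : Fin n, s ^ (i : ℕ) • φ i = 0} ⊆
      Function.support (fun s : ℝ => ‖∑ i : Fin n, s ^ (i : ℕ) • φ i‖ ^ 2) ∩ Ioc 0 1 :=
    fun s ⟨hs, hs0⟩ => ⟨by simpa using hs0, hs⟩
  calc (0 : ENNReal) < volume (Ioc (0 : ℝ) 1) := by simp
    _ = volume (Ioc (0 : ℝ) 1 \ {s | ∑ i : Fin n, s ^ (i : ℕ) • φ i = 0}) :=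
      (measure_sdiff_null ((finite_setOf_sum_pow_smul_eq_zero hφ).measure_zero _)).symm
    _ ≤ _ := measure_mono hsub

theorem exists_sq_norm_le_mul_integral_unitInterval (m : ℕ) :
    ∃ C > 0, ∀ f : ℝ → ℂ, IsPolyDeg ℂ m f → ∀ t ∈ Icc (0 : ℝ) 1,
      ‖f t‖ ^ 2 ≤ C * ∫ s in (0 : ℝ)..1, ‖f s‖ ^ 2 := by
  let N : (Fin (m + 1) → ℂ) → ℝ :=
    fun φ => ∫ s in (0 : ℝ)..1, ‖∑ i : Fin (m + 1), s ^ (i : ℕ) • φ i‖ ^ 2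
  have hN : Continuous N :=
    continuous_parametric_intervalIntegral_of_continuous' (by fun_prop) 0 1
  have hsmul : ∀ (r : ℝ) (φ : Fin (m + 1) → ℂ), N (r • φ) = r ^ 2 * N φ := by
    intro r φ
    simp only [N, Pi.smul_apply, smul_comm _ r, ← Finset.smul_sum, norm_smul, mul_pow,
      Real.norm_eq_abs, sq_abs, intervalIntegral.integral_const_mul]
  obtain ⟨c, hc, hcN⟩ := exists_pos_mul_sq_norm_le_of_homogeneous hN hsmul
    fun φ hφ => integral_sq_norm_sum_pow_smul_pos hφ
  refine ⟨(m + 1) ^ 2 / c, by positivity, ?_⟩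
  rintro f ⟨φ, hφ⟩ t ⟨ht₀, ht₁⟩
  have hpt : ‖f t‖ ≤ (m + 1) * ‖φ‖ := by
    rw [hφ]
    refine (norm_sum_le _ _).trans ?_
    calc ∑ i : Fin (m + 1), ‖t ^ (i : ℕ) • φ i‖ ≤ ∑ _i : Fin (m + 1), ‖φ‖ := by
          refine Finset.sum_le_sum fun i _ => ?_
          rw [norm_smul, norm_pow, Real.norm_of_nonneg ht₀]
          exact (mul_le_mul (pow_le_one₀ ht₀ ht₁) (norm_le_pi_norm φ i) (norm_nonneg _)
            zero_le_one).trans_eq (one_mul _)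
      _ = (m + 1) * ‖φ‖ := by simp
  have hNf : N φ = ∫ s in (0 : ℝ)..1, ‖f s‖ ^ 2 := by simp only [N, hφ]
  calc ‖f t‖ ^ 2 ≤ ((m + 1) * ‖φ‖) ^ 2 := pow_le_pow_left₀ (norm_nonneg _) hpt 2
    _ = (m + 1) ^ 2 / c * (c * ‖φ‖ ^ 2) := by field_simp
    _ ≤ (m + 1) ^ 2 / c * ∫ s in (0 : ℝ)..1, ‖f s‖ ^ 2 := by
      rw [← hNf]
      exact mul_le_mul_of_nonneg_left (hcN φ) (by positivity)

theorem IsPolyDeg.sq_norm_le_of_complex {X : Type*} [NormedAddCommGroup X]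
    [InnerProductSpace ℂ X] {m : ℕ} {a b C : ℝ} (hab : a ≤ b) (hC : 0 ≤ C)
    (hscalar : ∀ f : ℝ → ℂ, IsPolyDeg ℂ m f → ∀ t ∈ Icc a b,
      ‖f t‖ ^ 2 ≤ C * ∫ s in a..b, ‖f s‖ ^ 2)
    {v : ℝ → X} (hv : IsPolyDeg X m v) {t : ℝ} (ht : t ∈ Icc a b) :
    ‖v t‖ ^ 2 ≤ C * ∫ s in a..b, ‖v s‖ ^ 2 := by
  set x := v t
  rcases eq_or_ne x 0 with hx | hx
  · rw [hx, norm_zero, zero_pow two_ne_zero]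
    exact mul_nonneg hC (integral_nonneg hab fun s _ => by positivity)
  have hvc := hv.continuous
  have hbound :
      ∫ s in a..b, ‖inner ℂ x (v s)‖ ^ 2 ≤ ‖x‖ ^ 2 * ∫ s in a..b, ‖v s‖ ^ 2 := by
    rw [← intervalIntegral.integral_const_mul]
    refine integral_mono_on hab (Continuous.intervalIntegrable (by fun_prop) _ _)
      (Continuous.intervalIntegrable (by fun_prop) _ _) fun s _ => ?_
    rw [← mul_pow]
    exact pow_le_pow_left₀ (norm_nonneg _) (norm_inner_le_norm _ _) 2
  have hx4 : ‖inner ℂ x (v t)‖ ^ 2 = ‖x‖ ^ 2 * ‖x‖ ^ 2 := by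
    rw [inner_self_eq_norm_sq_to_K, norm_pow, RCLike.norm_ofReal, abs_norm]
    ring
  -- `‖v t‖⁴ = ‖⟪v t, v t⟫‖²`, and `⟪v t, v ·⟫` is a scalar polynomial of the same degree.
  have := (hscalar _ (hv.inner_left x) t ht).trans (mul_le_mul_of_nonneg_left hbound hC)
  rw [hx4, mul_left_comm] at this
  exact le_of_mul_le_mul_left this (by positivity)

theorem IsPolyDeg.mul_sq_norm_le_of_unitInterval {X : Type*} [NormedAddCommGroup X]
    [NormedSpace ℝ X] {m : ℕ} {C : ℝ}
    (hunit : ∀ f : ℝ → X, IsPolyDeg X m f → ∀ t ∈ Icc (0 : ℝ) 1,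
      ‖f t‖ ^ 2 ≤ C * ∫ s in (0 : ℝ)..1, ‖f s‖ ^ 2)
    {v : ℝ → X} (hv : IsPolyDeg X m v) {a τ : ℝ} (hτ : 0 < τ) {t : ℝ}
    (ht : t ∈ Icc a (a + τ)) :
    τ * ‖v t‖ ^ 2 ≤ C * ∫ s in a..a + τ, ‖v s‖ ^ 2 := by
  have hs : (t - a) / τ ∈ Icc (0 : ℝ) 1 :=
    ⟨div_nonneg (by linarith [ht.1]) hτ.le, (div_le_one hτ).mpr (by linarith [ht.2])⟩
  have h := hunit _ (hv.comp_add_mul a τ) _ hs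
  rw [mul_div_cancel₀ _ hτ.ne', add_sub_cancel,
    integral_comp_add_mul (fun s => ‖v s‖ ^ 2) hτ.ne', mul_zero, add_zero, mul_one,
    smul_eq_mul] at h
  calc τ * ‖v t‖ ^ 2 ≤ τ * (C * (τ⁻¹ * ∫ s in a..a + τ, ‖v s‖ ^ 2)) := by gcongr
    _ = C * ∫ s in a..a + τ, ‖v s‖ ^ 2 := by field_simp

theorem norm_le_of_integral_inner_eq_zero {X : Type*} [NormedAddCommGroup X]
    [InnerProductSpace ℂ X] {a b C S : ℝ} (hab : a < b) (hC : 0 ≤ C) {e v : ℝ → X}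
    (he : Continuous e) (hv : Continuous v) (horth : ∫ s in a..b, inner ℂ (e s) (v s) = 0)
    (hinv : ∀ s ∈ Icc a b, (b - a) * ‖v s‖ ^ 2 ≤ C * ∫ s in a..b, ‖v s‖ ^ 2)
    (hS : ∀ s ∈ Icc a b, ‖e s + v s‖ ≤ S) {t : ℝ} (ht : t ∈ Icc a b) :
    ‖e t‖ ≤ (1 + C) * S := by
  obtain ⟨t₀, ht₀, hmax⟩ :=
    isCompact_Icc.exists_isMaxOn (nonempty_Icc.2 hab.le) hv.norm.continuousOn
  set M := ‖v t₀‖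
  have hM : ∀ s ∈ Icc a b, ‖v s‖ ≤ M := hmax
  have hS0 : 0 ≤ S := (norm_nonneg _).trans (hS a (left_mem_Icc.2 hab.le))
  have hL2 :
      ((∫ s in a..b, ‖v s‖ ^ 2 : ℝ) : ℂ) = ∫ s in a..b, inner ℂ (e s + v s) (v s) := by
    simp_rw [inner_add_left]
    rw [integral_add (Continuous.intervalIntegrable (by fun_prop) _ _)
      (Continuous.intervalIntegrable (by fun_prop) _ _), horth, zero_add, ← integral_ofReal]
    simp_rw [inner_self_eq_norm_sq_to_K]
    push_cast
    rfl
  have hL2le : ∫ s in a..b, ‖v s‖ ^ 2 ≤ (b - a) * (S * M) := by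
    calc ∫ s in a..b, ‖v s‖ ^ 2 = ‖((∫ s in a..b, ‖v s‖ ^ 2 : ℝ) : ℂ)‖ := by
          rw [Complex.norm_real,
            Real.norm_of_nonneg (integral_nonneg hab.le fun s _ => by positivity)]
      _ ≤ ∫ s in a..b, S * M := by
          rw [hL2]
          refine norm_integral_le_of_norm_le hab.le (.of_forall fun s hs => ?_)
            intervalIntegrable_const
          exact (norm_inner_le_norm _ _).trans (mul_le_mul (hS s (Ioc_subset_Icc_self hs))
            (hM s (Ioc_subset_Icc_self hs)) (norm_nonneg _) hS0)
      _ = (b - a) * (S * M) := by rw [intervalIntegral.integral_const, smul_eq_mul]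
  have hMsq : (b - a) * (M * M) ≤ (b - a) * (C * S * M) := by
    calc (b - a) * (M * M) = (b - a) * M ^ 2 := by ring
      _ ≤ C * ((b - a) * (S * M)) := (hinv t₀ ht₀).trans (mul_le_mul_of_nonneg_left hL2le hC)
      _ = (b - a) * (C * S * M) := by ring
  have hMle : M ≤ C * S := by
    have := le_of_mul_le_mul_left hMsq (sub_pos.2 hab)
    nlinarith [norm_nonneg (v t₀), mul_nonneg hC hS0]
  calc ‖e t‖ = ‖(e t + v t) - v t‖ := by rw [add_sub_cancel_right]
    _ ≤ ‖e t + v t‖ + ‖v t‖ := norm_sub_le _ _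
    _ ≤ S + C * S := add_le_add (hS t ht) ((hM t ht).trans hMle)
    _ = (1 + C) * S := by ring

theorem ritz_derivative_quasioptimality (k : ℕ) (hk : 1 ≤ k) :
    -- C depends only on k (not on τ, u, X)
    ∃ C : ℝ, 0 < C ∧
      -- X : a complex Hilbert space
      ∀ (X : Type u) [NormedAddCommGroup X] [InnerProductSpace ℂ X] [CompleteSpace X],
      ∀ (a τ : ℝ), 0 < τ →
      ∀ u : ℝ → X, ContDiff ℝ 1 u →
      ∀ p : ℝ → X, IsRitzOn X a (a + τ) k u p →
        (⨆ t : Set.Icc a (a + τ), ‖deriv u (t : ℝ) - deriv p (t : ℝ)‖)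
          ≤ C * ⨅ g : {g : ℝ → X // IsPolyDeg X k g},
              ⨆ t : Set.Icc a (a + τ), ‖deriv u (t : ℝ) - deriv g.1 (t : ℝ)‖ := by
  obtain ⟨m, rfl⟩ : ∃ m, k = m + 1 := ⟨k - 1, by omega⟩
  obtain ⟨C, hC, hunit⟩ := exists_sq_norm_le_mul_integral_unitInterval m
  refine ⟨1 + C, by positivity, ?_⟩
  rintro X _ _ _ a τ hτ u hu p ⟨hp, -, horth⟩
  have : Nonempty (Icc a (a + τ)) := ⟨⟨a, left_mem_Icc.2 (by linarith)⟩⟩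
  have : Nonempty {g : ℝ → X // IsPolyDeg X (m + 1) g} := ⟨⟨p, hp⟩⟩
  have hu' : Continuous (deriv u) := hu.continuous_deriv le_rfl
  rw [Real.mul_iInf_of_nonneg (by positivity)]
  refine le_ciInf fun ⟨g, hg⟩ => ciSup_le ?_
  rintro ⟨t, ht⟩
  have hv := hp.deriv.sub hg.deriv
  have hbdd : BddAbove (range fun s : Icc a (a + τ) => ‖deriv u s - deriv g s‖) :=
    (isCompact_range ((hu'.sub hg.deriv.continuous).norm.comp continuous_subtype_val)).bddAbove
  refine norm_le_of_integral_inner_eq_zero (by linarith) hC.le (hu'.sub hp.deriv.continuous)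
    hv.continuous (horth _ hv) (fun s hs => ?_) (fun s hs => ?_) ht
  · rw [add_sub_cancel_left]
    exact hv.mul_sq_norm_le_of_unitInterval
      (fun f hf t ht => hf.sq_norm_le_of_complex zero_le_one hC.le hunit ht) hτ hs
  · simpa only [Pi.sub_apply, sub_add_sub_cancel] using le_ciSup hbdd ⟨s, hs⟩
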